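/- Let ψ be a diffeomorphism (biholomorphism) of an open subset of 𝔻^{k+1} × 𝔻^m preserving the form ω = i_X μ up to a nonvanishing factor θ, i.e., ψ*ω = θ ω, where X is a vector field on 𝔻^{k+1} viewed on the product and μ = dx₁∧⋯∧dx_{k+1}. Suppose ψ_*(∂/∂y₁) = λ X + Σⱼ λⱼ ∂/∂yⱼ for smooth functions λ, λⱼ. Then ∂θ/∂y₁ · ω = (λ∘ψ)(div(X)∘ψ) θ ω. In particular ∂θ/∂y₁ vanishes at every point where div(X)∘ψ vanishes and ω is nonzero at some nearby direction (more precisely, ∂θ/∂y₁ · ω = 0 there). -/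

import Mathlib

open Function Matrix

noncomputable section

/-- Differential `k`-forms on `ℂ^ι`, as alternating-map-valued functions. -/
abbrev Form (k : ℕ) (ι : Type) : Type :=
  (ι → ℂ) → ((ι → ℂ) [⋀^Fin k]→ₗ[ℂ] ℂ)

/-- Vector fields on `ℂ^ι`. -/
abbrev VF (ι : Type) := (ι → ℂ) → (ι → ℂ)

/-- The standard holomorphic volume form `dx₁ ∧ ⋯ ∧ dxₙ`. -/
def volForm (n : ℕ) : Form n (Fin n) := fun _ => Matrix.detRowAlternating

/-- Interior product (contraction) `i_X ω`. -/
def intProd {k : ℕ} {ι : Type} (X : VF ι) (ω : Form (k + 1) ι) : Form k ι :=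
  fun p => (ω p).curryLeft (X p)

/-- Exterior derivative at a point, as a pointwise multilinear expression. -/
def extDerivAt {k : ℕ} {ι : Type} [Fintype ι] (ω : Form k ι) (p : ι → ℂ)
    (v : Fin (k + 1) → ι → ℂ) : ℂ :=
  ∑ i : Fin (k + 1), (-1 : ℂ) ^ (i : ℕ) *
    fderiv ℂ (fun q => ω q (v ∘ i.succAbove)) p (v i)

/-- Lie derivative of a `k`-form along a vector field, at a point. -/
def lieDerivAt {k : ℕ} {ι : Type} [Fintype ι] (X : VF ι) (ω : Form k ι) (p : ι → ℂ)
    (v : Fin k → ι → ℂ) : ℂ :=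
  fderiv ℂ (fun q => ω q v) p (X p) +
    ∑ i : Fin k, ω p (Function.update v i (fderiv ℂ X p (v i)))

/-- Divergence of a vector field. -/
def divergence {ι : Type} [Fintype ι] [DecidableEq ι] (X : VF ι) (p : ι → ℂ) : ℂ :=
  ∑ i : ι, fderiv ℂ X p (Pi.single i 1) i

/-- The unit polydisc. -/
def polydisc (ι : Type) : Set (ι → ℂ) := {x | ∀ i, ‖x i‖ < 1}

/-- Wedge of a (pointwise) 1-form with a plain `k`-form expression. -/
def wedge1At {k : ℕ} {ι : Type} (α : (ι → ℂ) →L[ℂ] ℂ) (β : (Fin k → ι → ℂ) → ℂ)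
    (v : Fin (k + 1) → ι → ℂ) : ℂ :=
  ∑ i : Fin (k + 1), (-1 : ℂ) ^ (i : ℕ) * α (v i) * β (v ∘ i.succAbove)

/-- Index type for the product `𝔻^n × 𝔻^m`. -/
abbrev PIdx (n m : ℕ) := Sum (Fin n) (Fin m)

/-- The form `dx₁ ∧ ⋯ ∧ dxₙ` pulled back to the product `ℂ^n × ℂ^m`. -/
def volX (n m : ℕ) : Form n (PIdx n m) :=
  fun _ => Matrix.detRowAlternating.compLinearMap (LinearMap.funLeft ℂ ℂ Sum.inl)

/-- `X` depends only on the `x`-coordinates. -/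
def DependsOnlyOnX {n m : ℕ} (X : VF (PIdx n m)) : Prop :=
  ∀ p q : PIdx n m → ℂ, (∀ i, p (Sum.inl i) = q (Sum.inl i)) → X p = X q

/-- `X` has no component in the `y`-directions. -/
def NoYComponent {n m : ℕ} (X : VF (PIdx n m)) : Prop :=
  ∀ (p : PIdx n m → ℂ) (j : Fin m), X p (Sum.inr j) = 0

/-- The coordinate vector field `∂/∂yⱼ` on the product. -/
def dY {n m : ℕ} (j : Fin m) : VF (PIdx n m) := fun _ => Pi.single (Sum.inr j) 1

/-!
Restrict `ψ*ω = θ ω` to the complex line `t ↦ p + t e`, `e = ∂/∂y₁`, and differentiate at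
`t = 0`. As `X` and `μ` do not depend on `y`, the right side is `θ (p + t e) · ω_p(v)`, with
derivative `∂θ/∂y₁ · ω_p(v)`. The left side is the determinant of the `x`-rows of the frame
`(X (ψ q), dψ_q v₁, …, dψ_q v_k)` at `q = p + t e`. Its first row moves with velocity
`dX (ψ_* e) = λ dX (X)`, since `dX` kills the `∂/∂yⱼ`; by symmetry of the second derivative of
`ψ` the others move with velocity `d(ψ_* e) (dψ vᵢ) = (dλ ·) X + λ dX (dψ vᵢ) + (∂/∂yⱼ terms)`.
Up to multiples of the first row and `y`-components, which the determinant does not see, each row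
is thus moved by `λ ∂X/∂x`, and the determinant moves by `λ tr (∂X/∂x) = λ div X` times itself.
-/

open Set Metric Complex Filter Topology
open scoped Real

section Determinant

variable {R : Type*} [CommRing R] {n : Type*} [Fintype n] [DecidableEq n]

theorem Matrix.det_updateRow_eq_adjugate_transpose_mulVec (M : Matrix n n R) (t : n)
    (u : n → R) : (M.updateRow t u).det = (adjugate Mᵀ *ᵥ u) t := by
  rw [← det_transpose, ← updateCol_transpose, ← cramer_apply, cramer_eq_adjugate_mulVec]

theorem Matrix.sum_det_updateRow_mulVec (M N : Matrix n n R) :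
    ∑ t, (M.updateRow t (N *ᵥ M t)).det = N.trace * M.det := by
  simp_rw [det_updateRow_eq_adjugate_transpose_mulVec, mulVec_mulVec]
  calc ∑ t, ((adjugate Mᵀ * N) *ᵥ M t) t = trace (adjugate Mᵀ * N * Mᵀ) := by
        simp [trace, mul_apply, mulVec, dotProduct]
    _ = trace (Mᵀ * adjugate Mᵀ * N) := by rw [trace_mul_cycle, Matrix.mul_assoc]
    _ = N.trace * M.det := by
        rw [mul_adjugate, det_transpose, smul_mul, Matrix.one_mul, trace_smul, smul_eq_mul,
          mul_comm]

theorem Matrix.sum_det_updateRow_mulVec_add_smul (M N : Matrix n n R) (c : n → R) (s : n) :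
    ∑ t, (M.updateRow t (N *ᵥ M t + c t • M s)).det = (N.trace + c s) * M.det := by
  have hc : ∀ t, (M.updateRow t (c t • M s)).det = if t = s then c s * M.det else 0 := by
    intro t
    split_ifs with h
    · subst h; rw [det_updateRow_smul, updateRow_eq_self]
    · rw [det_updateRow_smul, det_updateRow_eq_zero (Ne.symm h), mul_zero]
  simp_rw [det_updateRow_add, Finset.sum_add_distrib, hc, sum_det_updateRow_mulVec,
    Finset.sum_ite_eq', Finset.mem_univ, if_true, add_mul]

end Determinant

theorem HasDerivAt.matrix_det {𝕜 : Type*} [NontriviallyNormedField 𝕜] {n : Type*} [Fintype n]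
    [DecidableEq n] {M : 𝕜 → n → n → 𝕜} {M' : n → n → 𝕜} {t : 𝕜} (h : HasDerivAt M M' t) :
    HasDerivAt (fun s => (of (M s)).det) (∑ i, ((of (M t)).updateRow i (M' i)).det) t := by
  let D : ContinuousMultilinearMap 𝕜 (fun _ : n => n → 𝕜) 𝕜 :=
    ⟨detRowAlternating.toMultilinearMap, continuous_id.matrix_det⟩
  have := (D.hasFDerivAt (M t)).comp_hasDerivAt t h
  rw [ContinuousMultilinearMap.linearDeriv_apply] at this
  exact this

section Cauchy

variable {E : Type*} [NormedAddCommGroup E] [NormedSpace ℂ E]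

theorem hasDerivAt_circleIntegral_of_hasDerivAt {F F' : ℂ → ℂ → E} {t₀ c : ℂ} {ε R : ℝ}
    (hε : 0 < ε) (hF : ∀ t ∈ ball t₀ ε, ContinuousOn (F t) (sphere c |R|))
    (hF' : ContinuousOn (uncurry F') (closedBall t₀ ε ×ˢ sphere c |R|))
    (hFF' : ∀ t ∈ ball t₀ ε, ∀ w ∈ sphere c |R|, HasDerivAt (F · w) (F' t w) t) :
    HasDerivAt (fun t => ∮ w in C(c, R), F t w) (∮ w in C(c, R), F' t₀ w) t₀ := by
  obtain ⟨C, hC⟩ := ((isCompact_closedBall t₀ ε).prod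
    (isCompact_sphere c |R|)).exists_bound_of_continuousOn hF'
  have hcirc : ∀ θ : ℝ, circleMap c R θ ∈ sphere c |R| := circleMap_mem_sphere' c R
  have hderiv : Continuous fun θ => deriv (circleMap c R) θ := by
    simp only [deriv_circleMap]; exact (continuous_circleMap 0 R).mul continuous_const
  have hcont : ∀ {G : ℂ → E}, ContinuousOn G (sphere c |R|) →
      Continuous fun θ => deriv (circleMap c R) θ • G (circleMap c R θ) := fun hG =>
    hderiv.smul (hG.comp_continuous (continuous_circleMap c R) hcirc)
  simp only [circleIntegral]
  refine (intervalIntegral.hasDerivAt_integral_of_dominated_loc_of_deriv_le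
    (F := fun t θ => deriv (circleMap c R) θ • F t (circleMap c R θ))
    (F' := fun t θ => deriv (circleMap c R) θ • F' t (circleMap c R θ))
    (μ := MeasureTheory.volume) (bound := fun _ => |R| * C) (ball_mem_nhds t₀ hε) ?_ ?_ ?_ ?_
    intervalIntegrable_const ?_).2
  · filter_upwards [ball_mem_nhds t₀ hε] with t ht
    exact (hcont (hF t ht)).aestronglyMeasurable
  · exact (hcont (hF t₀ (mem_ball_self hε))).intervalIntegrable _ _
  · refine (hcont ?_).aestronglyMeasurable
    exact hF'.comp (continuousOn_const.prodMk continuousOn_id) fun w hw =>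
      ⟨mem_closedBall_self hε.le, hw⟩
  · refine .of_forall fun θ _ t ht => ?_
    rw [norm_smul, deriv_circleMap, norm_mul, norm_I, mul_one, norm_circleMap_zero]
    exact mul_le_mul_of_nonneg_left (hC (t, _) ⟨ball_subset_closedBall ht, hcirc θ⟩) (abs_nonneg R)
  · exact .of_forall fun θ _ t ht => (hFF' t ht _ (hcirc θ)).const_smul _

theorem hasDerivAt_cderiv_of_hasDerivAt {F F' : ℂ → ℂ → E} {t₀ z : ℂ} {ε r : ℝ}
    (hε : 0 < ε) (hr : 0 < r) (hF : ∀ t ∈ ball t₀ ε, ContinuousOn (F t) (sphere z r))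
    (hF' : ContinuousOn (uncurry F') (closedBall t₀ ε ×ˢ sphere z r))
    (hFF' : ∀ t ∈ ball t₀ ε, ∀ w ∈ sphere z r, HasDerivAt (F · w) (F' t w) t) :
    HasDerivAt (fun t => cderiv r (F t) z) (cderiv r (F' t₀) z) t₀ := by
  have hr' : |r| = r := abs_of_pos hr
  have hinv : ContinuousOn (fun w : ℂ => ((w - z) ^ 2)⁻¹) (sphere z r) :=
    ((continuousOn_id.sub continuousOn_const).pow 2).inv₀ fun w hw =>
      pow_ne_zero 2 (sub_ne_zero.2 (ne_of_mem_sphere hw hr.ne'))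
  refine (hasDerivAt_circleIntegral_of_hasDerivAt (F := fun t w => ((w - z) ^ 2)⁻¹ • F t w)
    (F' := fun t w => ((w - z) ^ 2)⁻¹ • F' t w) hε ?_ ?_ ?_).const_smul ((2 * π * I : ℂ)⁻¹)
  · rw [hr']; exact fun t ht => hinv.smul (hF t ht)
  · rw [hr']; exact (hinv.comp continuousOn_snd fun x hx => hx.2).smul hF'
  · rw [hr']; exact fun t ht w hw => (hFF' t ht w hw).const_smul _

end Cauchy

section Mixed

variable {E F : Type*} [NormedAddCommGroup E] [NormedSpace ℂ E]
  [NormedAddCommGroup F] [NormedSpace ℂ F] [CompleteSpace F]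

theorem fderiv_apply_eq_cderiv {f : E → F} {U : Set E} (hU : IsOpen U)
    (hf : DifferentiableOn ℂ f U) {q b : E} {r : ℝ} (hr : 0 < r)
    (hqb : ∀ s : ℂ, ‖s‖ ≤ r → q + s • b ∈ U) :
    fderiv ℂ f q b = cderiv r (fun s => f (q + s • b)) 0 := by
  have hline : Continuous fun s : ℂ => q + s • b := by fun_prop
  have hq : q ∈ U := by simpa using hqb 0 (by simp [hr.le])
  have hg : DifferentiableOn ℂ (fun s : ℂ => f (q + s • b)) ((fun s : ℂ => q + s • b) ⁻¹' U) :=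
    hf.comp (by fun_prop) fun s hs => hs
  rw [cderiv_eq_deriv (hU.preimage hline) hg hr fun s hs => hqb s (by simpa using hs),
    ← lineDeriv, (hf.differentiableAt (hU.mem_nhds hq)).lineDeriv_eq_fderiv]

theorem IsOpen.exists_pos_forall_add_smul_add_smul_mem {U : Set E} (hU : IsOpen U) {p : E}
    (hp : p ∈ U) (a b : E) : ∃ r > 0, ∀ t s : ℂ, ‖t‖ ≤ r → ‖s‖ ≤ r → p + t • a + s • b ∈ U := by
  have hφ : Continuous fun ts : ℂ × ℂ => p + ts.1 • a + ts.2 • b := by fun_prop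
  obtain ⟨r, hr, hrU⟩ := nhds_basis_closedBall.mem_iff.1
    (hφ.continuousAt.preimage_mem_nhds (by simpa using hU.mem_nhds hp) :
      (fun ts : ℂ × ℂ => p + ts.1 • a + ts.2 • b) ⁻¹' U ∈ 𝓝 ((0, 0) : ℂ × ℂ))
  exact ⟨r, hr, fun t s ht hs =>
    @hrU (t, s) (by rw [← closedBall_prod_same]; exact ⟨by simpa using ht, by simpa using hs⟩)⟩

/- Symmetry of the mixed second derivative. As `f` is only assumed complex differentiable, the
derivative along `b` is written as a Cauchy integral, which is then differentiated in `t`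
under the integral sign. -/
theorem hasDerivAt_fderiv_apply_line {f Z : E → F} {U : Set E} (hU : IsOpen U)
    (hf : DifferentiableOn ℂ f U) (hZ : DifferentiableOn ℂ Z U) {a : E}
    (hfZ : ∀ q ∈ U, fderiv ℂ f q a = Z q) {p : E} (hp : p ∈ U) (b : E) :
    HasDerivAt (fun t : ℂ => fderiv ℂ f (p + t • a) b) (fderiv ℂ Z p b) 0 := by
  obtain ⟨r, hr, hφU⟩ := hU.exists_pos_forall_add_smul_add_smul_mem hp a b
  have hmaps : MapsTo (fun ts : ℂ × ℂ => p + ts.1 • a + ts.2 • b)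
      (closedBall 0 r ×ˢ sphere 0 r) U := fun ts hts =>
    hφU ts.1 ts.2 (by simpa using hts.1) (by simpa using hts.2.le)
  have hcd : (fun t : ℂ => fderiv ℂ f (p + t • a) b) =ᶠ[𝓝 0]
      fun t => cderiv r (fun s => f (p + t • a + s • b)) 0 := by
    filter_upwards [ball_mem_nhds (0 : ℂ) hr] with t ht
    exact fderiv_apply_eq_cderiv hU hf hr fun s hs =>
      hφU t s (by simpa using (mem_ball_zero_iff.1 ht).le) hs
  have hZcd : fderiv ℂ Z p b = cderiv r (fun s => Z (p + (0 : ℂ) • a + s • b)) 0 := by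
    simpa using fderiv_apply_eq_cderiv hU hZ hr fun s hs => by
      simpa using hφU 0 s (by simp [hr.le]) hs
  rw [hZcd]
  refine (hasDerivAt_cderiv_of_hasDerivAt (F := fun t s => f (p + t • a + s • b))
    (F' := fun t s => Z (p + t • a + s • b)) hr hr (fun t ht => ?_) ?_
    fun t ht s hs => ?_).congr_of_eventuallyEq hcd
  · exact hf.continuousOn.comp (by fun_prop) fun s hs =>
      @hmaps (t, s) ⟨ball_subset_closedBall ht, hs⟩
  · exact hZ.continuousOn.comp (by fun_prop) hmaps
  · have hmem : p + t • a + s • b ∈ U := @hmaps (t, s) ⟨ball_subset_closedBall ht, hs⟩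
    have hline : HasDerivAt (fun t : ℂ => p + t • a + s • b) a t := by
      simpa using ((hasDerivAt_id t).smul_const a).const_add p |>.add_const (s • b)
    have := (hf.differentiableAt (hU.mem_nhds hmem)).hasFDerivAt.comp_hasDerivAt t hline
    rwa [hfZ _ hmem] at this

end Mixed

section Frame

variable {E : Type*} [NormedAddCommGroup E] [NormedSpace ℂ E] [CompleteSpace E]

theorem hasDerivAt_cons_fderiv_line {U V : Set E} (hU : IsOpen U) (hV : IsOpen V) {ψ X Z : E → E}
    (hψ : DifferentiableOn ℂ ψ U) (hψV : MapsTo ψ U V) (hZ : DifferentiableOn ℂ Z V) {e : E}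
    (hψZ : ∀ q ∈ U, fderiv ℂ ψ q e = Z (ψ q)) {p : E} (hp : p ∈ U)
    (hX : DifferentiableAt ℂ X (ψ p)) {k : ℕ} (v : Fin k → E) :
    HasDerivAt (fun t : ℂ => (Fin.cons (X (ψ (p + t • e))) fun i => fderiv ℂ ψ (p + t • e) (v i) :
        Fin (k + 1) → E))
      (Fin.cons (fderiv ℂ X (ψ p) (Z (ψ p))) fun i => fderiv ℂ Z (ψ p) (fderiv ℂ ψ p (v i))) 0 := by
  have hψp : DifferentiableAt ℂ ψ p := hψ.differentiableAt (hU.mem_nhds hp)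
  have hZp : DifferentiableAt ℂ Z (ψ p) := hZ.differentiableAt (hV.mem_nhds (hψV hp))
  have hZψ : DifferentiableOn ℂ (fun q => Z (ψ q)) U := hZ.comp hψ hψV
  refine hasDerivAt_pi.2 (Fin.cases ?_ fun i => ?_)
  · have hline : HasDerivAt (fun t : ℂ => ψ (p + t • e)) (Z (ψ p)) 0 :=
      hψZ p hp ▸ hψp.hasFDerivAt.hasLineDerivAt e
    exact hX.hasFDerivAt.comp_hasDerivAt_of_eq 0 hline (by simp)
  · have hchain : fderiv ℂ (fun q => Z (ψ q)) p = (fderiv ℂ Z (ψ p)).comp (fderiv ℂ ψ p) :=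
      fderiv_comp p hZp hψp
    simpa [hchain] using hasDerivAt_fderiv_apply_line hU hψ hZψ hψZ hp (v i)

end Frame

theorem isOpen_polydisc (ι : Type) [Finite ι] : IsOpen (polydisc ι) := by
  simp only [polydisc, ofPred_forall]
  exact isOpen_iInter_of_finite fun i => isOpen_lt (by fun_prop) continuous_const

section Product

variable {n m : ℕ}

theorem DependsOnlyOnX.apply_add_smul_single_inr {X : VF (PIdx n m)} (hX : DependsOnlyOnX X)
    (q : PIdx n m → ℂ) (t : ℂ) (j : Fin m) : X (q + t • Pi.single (Sum.inr j) 1) = X q :=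
  hX _ _ fun i => by simp

theorem DependsOnlyOnX.fderiv_single_inr {X : VF (PIdx n m)} (hX : DependsOnlyOnX X)
    (q : PIdx n m → ℂ) (j : Fin m) : fderiv ℂ X q (Pi.single (Sum.inr j) 1) = 0 := by
  by_cases hd : DifferentiableAt ℂ X q
  · rw [← hd.lineDeriv_eq_fderiv, lineDeriv]
    simp_rw [hX.apply_add_smul_single_inr]
    exact deriv_const _ _
  · rw [fderiv_zero_of_not_differentiableAt hd]; rfl

def xJacobian (X : VF (PIdx n m)) (q : PIdx n m → ℂ) : Matrix (Fin n) (Fin n) ℂ :=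
  of fun a b => fderiv ℂ X q (Pi.single (Sum.inl b) 1) (Sum.inl a)

theorem DependsOnlyOnX.trace_xJacobian {X : VF (PIdx n m)} (hX : DependsOnlyOnX X)
    (q : PIdx n m → ℂ) : (xJacobian X q).trace = divergence X q := by
  simp [divergence, Fintype.sum_sum_type, hX.fderiv_single_inr, xJacobian, trace]

theorem DependsOnlyOnX.fderiv_apply_comp_inl {X : VF (PIdx n m)} (hX : DependsOnlyOnX X)
    (q u : PIdx n m → ℂ) : fderiv ℂ X q u ∘ Sum.inl = xJacobian X q *ᵥ (u ∘ Sum.inl) := by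
  ext a
  rw [Function.comp_apply, ← (fderiv ℂ X q).coe_coe, ← LinearMap.toMatrix'_mulVec]
  simp [mulVec, dotProduct, Fintype.sum_sum_type, LinearMap.toMatrix'_apply,
    hX.fderiv_single_inr, xJacobian, mul_comm]

theorem intProd_volX_apply (X : VF (PIdx (n + 1) m)) (q : PIdx (n + 1) m → ℂ)
    (v : Fin n → PIdx (n + 1) m → ℂ) :
    intProd X (volX (n + 1) m) q v
      = (of fun i => (Fin.cons (X q) v : Fin (n + 1) → PIdx (n + 1) m → ℂ) i ∘ Sum.inl).det :=
  rfl

theorem DependsOnlyOnX.intProd_volX_add_smul_single_inr {X : VF (PIdx (n + 1) m)}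
    (hX : DependsOnlyOnX X) (q : PIdx (n + 1) m → ℂ) (t : ℂ) (j : Fin m)
    (v : Fin n → PIdx (n + 1) m → ℂ) :
    intProd X (volX (n + 1) m) (q + t • Pi.single (Sum.inr j) 1) v
      = intProd X (volX (n + 1) m) q v := by
  rw [intProd_volX_apply, intProd_volX_apply, hX.apply_add_smul_single_inr]

theorem fderiv_smul_add_sum_single_inr_comp_inl {X : VF (PIdx n m)}
    {lam : (PIdx n m → ℂ) → ℂ} {lams : Fin m → (PIdx n m → ℂ) → ℂ} (hXx : DependsOnlyOnX X)
    {y : PIdx n m → ℂ} (hX : DifferentiableAt ℂ X y) (hlam : DifferentiableAt ℂ lam y)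
    (hlams : ∀ j, DifferentiableAt ℂ (lams j) y) (u : PIdx n m → ℂ) :
    fderiv ℂ (fun z => lam z • X z + ∑ j, lams j z • (Pi.single (Sum.inr j) 1 : PIdx n m → ℂ))
        y u ∘ Sum.inl
      = lam y • (xJacobian X y *ᵥ (u ∘ Sum.inl)) + fderiv ℂ lam y u • (X y ∘ Sum.inl) := by
  have hsum : ∀ j ∈ Finset.univ,
      DifferentiableAt ℂ (fun z => lams j z • (Pi.single (Sum.inr j) 1 : PIdx n m → ℂ)) y :=
    fun j _ => (hlams j).smul_const _
  rw [fderiv_fun_add (f := fun z => lam z • X z) (hlam.smul hX) (.fun_sum hsum),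
    fderiv_fun_smul hlam hX, fderiv_fun_sum hsum, ← hXx.fderiv_apply_comp_inl]
  ext a
  simp [fderiv_smul_const (hlams _)]

theorem hasDerivAt_intProd_volX_pullback {U V : Set (PIdx (n + 1) m → ℂ)} (hU : IsOpen U)
    (hV : IsOpen V) {X ψ : VF (PIdx (n + 1) m)} {lam : (PIdx (n + 1) m → ℂ) → ℂ}
    {lams : Fin m → (PIdx (n + 1) m → ℂ) → ℂ} (hXx : DependsOnlyOnX X)
    (hX : DifferentiableOn ℂ X V) (hlam : DifferentiableOn ℂ lam V)
    (hlams : ∀ j, DifferentiableOn ℂ (lams j) V) (hψ : DifferentiableOn ℂ ψ U)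
    (hψV : MapsTo ψ U V) {j₁ : Fin m}
    (hpush : ∀ q ∈ U, fderiv ℂ ψ q (Pi.single (Sum.inr j₁) 1) = lam (ψ q) • X (ψ q)
      + ∑ j, lams j (ψ q) • (Pi.single (Sum.inr j) 1 : PIdx (n + 1) m → ℂ))
    {p : PIdx (n + 1) m → ℂ} (hp : p ∈ U) (v : Fin n → PIdx (n + 1) m → ℂ) :
    HasDerivAt (fun t : ℂ => intProd X (volX (n + 1) m) (ψ (p + t • Pi.single (Sum.inr j₁) 1))
        fun i => fderiv ℂ ψ (p + t • Pi.single (Sum.inr j₁) 1) (v i))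
      (lam (ψ p) * divergence X (ψ p) *
        intProd X (volX (n + 1) m) (ψ p) fun i => fderiv ℂ ψ p (v i)) 0 := by
  have hy : V ∈ 𝓝 (ψ p) := hV.mem_nhds (hψV hp)
  have hZ : DifferentiableOn ℂ (fun z => lam z • X z
      + ∑ j, lams j z • (Pi.single (Sum.inr j) 1 : PIdx (n + 1) m → ℂ)) V :=
    (hlam.smul hX).add (.fun_sum fun j _ => (hlams j).smul_const _)
  have hframe := hasDerivAt_cons_fderiv_line hU hV hψ hψV hZ hpush hp (hX.differentiableAt hy) v
  set W₀ : Fin (n + 1) → PIdx (n + 1) m → ℂ := Fin.cons (X (ψ p)) fun i => fderiv ℂ ψ p (v i)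
  set c : Fin (n + 1) → ℂ := Fin.cons 0 fun i => fderiv ℂ lam (ψ p) (fderiv ℂ ψ p (v i))
  have hrows : HasDerivAt
      (fun t : ℂ => fun i => (Fin.cons (X (ψ (p + t • Pi.single (Sum.inr j₁) 1)))
        (fun i => fderiv ℂ ψ (p + t • Pi.single (Sum.inr j₁) 1) (v i)) :
          Fin (n + 1) → PIdx (n + 1) m → ℂ) i ∘ Sum.inl)
      (fun i => (lam (ψ p) • xJacobian X (ψ p)) *ᵥ (W₀ i ∘ Sum.inl) + c i • (W₀ 0 ∘ Sum.inl))
      0 := by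
    refine (hasDerivAt_pi.2 fun i => hasDerivAt_pi.2 fun a =>
      hasDerivAt_pi.1 (hasDerivAt_pi.1 hframe i) (Sum.inl a)).congr_deriv ?_
    funext i
    refine Fin.cases ?_ (fun i => ?_) i
    · have hZx : (lam (ψ p) • X (ψ p) + ∑ j, lams j (ψ p) •
          (Pi.single (Sum.inr j) 1 : PIdx (n + 1) m → ℂ)) ∘ Sum.inl
          = lam (ψ p) • (X (ψ p) ∘ Sum.inl) := by
        ext a; simp
      change fderiv ℂ X (ψ p) _ ∘ Sum.inl = _
      simp only [hXx.fderiv_apply_comp_inl, hZx, c, W₀, Fin.cons_zero, zero_smul, add_zero,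
        mulVec_smul, smul_mulVec]
    · change fderiv ℂ _ (ψ p) _ ∘ Sum.inl = _
      simp only [fderiv_smul_add_sum_single_inr_comp_inl hXx (hX.differentiableAt hy)
        (hlam.differentiableAt hy) (fun j => (hlams j).differentiableAt hy), c, W₀,
        Fin.cons_zero, Fin.cons_succ, smul_mulVec]
  have hdet := hrows.matrix_det
  simp only [zero_smul, add_zero] at hdet
  refine hdet.congr_deriv ((sum_det_updateRow_mulVec_add_smul (of fun i => W₀ i ∘ Sum.inl)
    (lam (ψ p) • xJacobian X (ψ p)) c 0).trans ?_)
  rw [trace_smul, hXx.trace_xJacobian, intProd_volX_apply]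
  simp [c, W₀, mul_assoc]

end Product

theorem stmt4_general {k m : ℕ} (U : Set (PIdx (k + 1) m → ℂ)) (hU : IsOpen U)
    (X : VF (PIdx (k + 1) m)) (hXx : DependsOnlyOnX X)
    (hX : DifferentiableOn ℂ X (polydisc (PIdx (k + 1) m)))
    (ψ : (PIdx (k + 1) m → ℂ) → (PIdx (k + 1) m → ℂ))
    (hψ : DifferentiableOn ℂ ψ U) (hψin : ∀ p ∈ U, ψ p ∈ polydisc (PIdx (k + 1) m))
    (θ : (PIdx (k + 1) m → ℂ) → ℂ) (hθ : DifferentiableOn ℂ θ U)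
    (lam : (PIdx (k + 1) m → ℂ) → ℂ) (lams : Fin m → (PIdx (k + 1) m → ℂ) → ℂ)
    (hlam : DifferentiableOn ℂ lam (polydisc (PIdx (k + 1) m)))
    (hlams : ∀ j, DifferentiableOn ℂ (lams j) (polydisc (PIdx (k + 1) m)))
    -- `ψ* ω = θ ω` where `ω = i_X μ`:
    (hpull : ∀ p ∈ U, ∀ v : Fin k → PIdx (k + 1) m → ℂ,
      intProd X (volX (k + 1) m) (ψ p) (fun i => fderiv ℂ ψ p (v i))
        = θ p * intProd X (volX (k + 1) m) p v)
    (j1 : Fin m)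
    -- `ψ_*(∂/∂y₁) = λ X + Σⱼ λⱼ ∂/∂yⱼ`:
    (hpush : ∀ p ∈ U, fderiv ℂ ψ p (Pi.single (Sum.inr j1) 1)
      = lam (ψ p) • X (ψ p) + ∑ j : Fin m, lams j (ψ p) • (Pi.single (Sum.inr j) 1 : PIdx (k + 1) m → ℂ)) :
    (∀ p ∈ U, ∀ v : Fin k → PIdx (k + 1) m → ℂ,
        fderiv ℂ θ p (Pi.single (Sum.inr j1) 1) * intProd X (volX (k + 1) m) p v
          = lam (ψ p) * divergence X (ψ p) * (θ p * intProd X (volX (k + 1) m) p v)) ∧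
    (∀ p ∈ U, divergence X (ψ p) = 0 →
      ∀ v : Fin k → PIdx (k + 1) m → ℂ,
        fderiv ℂ θ p (Pi.single (Sum.inr j1) 1) * intProd X (volX (k + 1) m) p v = 0) := by
  set e : PIdx (k + 1) m → ℂ := Pi.single (Sum.inr j1) 1
  have hline : ∀ p ∈ U, ∀ v : Fin k → PIdx (k + 1) m → ℂ,
      fderiv ℂ θ p e * intProd X (volX (k + 1) m) p v
        = lam (ψ p) * divergence X (ψ p) * (θ p * intProd X (volX (k + 1) m) p v) := by
    intro p hp v
    have hlhs := hasDerivAt_intProd_volX_pullback hU (isOpen_polydisc _) hXx hX hlam hlams hψ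
      hψin hpush hp v
    have hrhs : HasDerivAt (fun t : ℂ => θ (p + t • e) * intProd X (volX (k + 1) m) p v)
        (fderiv ℂ θ p e * intProd X (volX (k + 1) m) p v) 0 :=
      HasDerivAt.mul_const ((hθ.differentiableAt (hU.mem_nhds hp)).hasFDerivAt.hasLineDerivAt e) _
    have hU_line : ∀ᶠ t : ℂ in 𝓝 0, p + t • e ∈ U :=
      (by fun_prop : Continuous fun t : ℂ => p + t • e).continuousAt.preimage_mem_nhds
        (by simpa using hU.mem_nhds hp)
    have hpull_line : (fun t : ℂ => intProd X (volX (k + 1) m) (ψ (p + t • e))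
          fun i => fderiv ℂ ψ (p + t • e) (v i))
        =ᶠ[𝓝 0] fun t => θ (p + t • e) * intProd X (volX (k + 1) m) p v :=
      hU_line.mono fun t ht => by
        dsimp only; rw [hpull _ ht v, hXx.intProd_volX_add_smul_single_inr]
    rw [hrhs.unique (hlhs.congr_of_eventuallyEq hpull_line.symm), hpull p hp v]
  exact ⟨hline, fun p hp hdiv v => by rw [hline p hp v, hdiv]; ring⟩

/-- If a biholomorphism `ψ` of an open subset of `𝔻^{k+1} × 𝔻^m` satisfies
`ψ*ω = θ·ω` where `ω = i_X μ`, and `ψ_*(∂/∂y₁) = λ X + Σⱼ λⱼ ∂/∂yⱼ`, then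
`(∂θ/∂y₁)·ω = (λ∘ψ)(div X ∘ ψ)·θ·ω`; in particular `(∂θ/∂y₁)·ω = 0` wherever
`div X ∘ ψ` vanishes. -/
theorem stmt4 {k m : ℕ} (U : Set (PIdx (k + 1) m → ℂ)) (hU : IsOpen U)
    (hUsub : U ⊆ polydisc (PIdx (k + 1) m))
    (X : VF (PIdx (k + 1) m)) (hXx : DependsOnlyOnX X) (hXv : NoYComponent X)
    (hX : DifferentiableOn ℂ X (polydisc (PIdx (k + 1) m)))
    (ψ : (PIdx (k + 1) m → ℂ) → (PIdx (k + 1) m → ℂ))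
    (hψ : DifferentiableOn ℂ ψ U) (hψin : ∀ p ∈ U, ψ p ∈ polydisc (PIdx (k + 1) m))
    (θ : (PIdx (k + 1) m → ℂ) → ℂ) (hθ : DifferentiableOn ℂ θ U)
    (hθne : ∀ p ∈ U, θ p ≠ 0)
    (lam : (PIdx (k + 1) m → ℂ) → ℂ) (lams : Fin m → (PIdx (k + 1) m → ℂ) → ℂ)
    (hlam : DifferentiableOn ℂ lam (polydisc (PIdx (k + 1) m)))
    (hlams : ∀ j, DifferentiableOn ℂ (lams j) (polydisc (PIdx (k + 1) m)))
    -- `ψ* ω = θ ω` where `ω = i_X μ`: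
    (hpull : ∀ p ∈ U, ∀ v : Fin k → PIdx (k + 1) m → ℂ,
      intProd X (volX (k + 1) m) (ψ p) (fun i => fderiv ℂ ψ p (v i))
        = θ p * intProd X (volX (k + 1) m) p v)
    (j1 : Fin m)
    -- `ψ_*(∂/∂y₁) = λ X + Σⱼ λⱼ ∂/∂yⱼ`:
    (hpush : ∀ p ∈ U, fderiv ℂ ψ p (Pi.single (Sum.inr j1) 1)
      = lam (ψ p) • X (ψ p) + ∑ j : Fin m, lams j (ψ p) • (Pi.single (Sum.inr j) 1 : PIdx (k + 1) m → ℂ)) :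
    (∀ p ∈ U, ∀ v : Fin k → PIdx (k + 1) m → ℂ,
        fderiv ℂ θ p (Pi.single (Sum.inr j1) 1) * intProd X (volX (k + 1) m) p v
          = lam (ψ p) * divergence X (ψ p) * (θ p * intProd X (volX (k + 1) m) p v)) ∧
    (∀ p ∈ U, divergence X (ψ p) = 0 →
      ∀ v : Fin k → PIdx (k + 1) m → ℂ,
        fderiv ℂ θ p (Pi.single (Sum.inr j1) 1) * intProd X (volX (k + 1) m) p v = 0) :=
  stmt4_general U hU X hXx hX ψ hψ hψin θ hθ lam lams hlam hlams hpull j1 hpush
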